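/- Applicative similarity for extended combinatory logic (xCL) is sound for the contextual preorder: for all terms p,q ∈ Λ, if p ≲app q then p ≲ctx q. -/

import Mathlib

namespace XCL

/-- Terms of extended combinatory logic (xCL). -/
inductive Tm : Type
  | S : Tm
  | K : Tm
  | I : Tm
  | S1 (t : Tm) : Tm
  | K1 (t : Tm) : Tm
  | S2 (t s : Tm) : Tm
  | app (t s : Tm) : Tm

/-- Labeled transitions `p —t→ p'` (`LStep p t p'`). -/
inductive LStep : Tm → Tm → Tm → Prop
  | S (t : Tm) : LStep .S t (.S1 t)
  | S1 (p t : Tm) : LStep (.S1 p) t (.S2 p t)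
  | S2 (p q t : Tm) : LStep (.S2 p q) t (.app (.app p t) (.app q t))
  | K (t : Tm) : LStep .K t (.K1 t)
  | K1 (p t : Tm) : LStep (.K1 p) t p
  | I (t : Tm) : LStep .I t t

/-- Unlabeled transitions `p → p'`. -/
inductive Step : Tm → Tm → Prop
  | appL {p p' : Tm} (q : Tm) : Step p p' → Step (.app p q) (.app p' q)
  | beta {p q p' : Tm} : LStep p q p' → Step (.app p q) p'

/-- `p ⇒ p'`: reflexive-transitive closure of `→`. -/
def Steps : Tm → Tm → Prop := Relation.ReflTransGen Step

/-- `p ⇒^t p'`: weak labeled transition. -/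
def WLStep (p t p' : Tm) : Prop := ∃ p'', Steps p p'' ∧ LStep p'' t p'

/-- `p` terminates: it admits no unlabeled transition. -/
def Terminates (p : Tm) : Prop := ∀ p', ¬ Step p p'

/-- `p ⇓ p'`. -/
def BigStep (p p' : Tm) : Prop := Steps p p' ∧ Terminates p'

/-- `p⇓`: `p` eventually terminates. -/
def Conv (p : Tm) : Prop := ∃ p', BigStep p p'

/-- Applicative simulations. -/
def IsAppSim (R : Tm → Tm → Prop) : Prop :=
  ∀ p q, R p q →
    (∀ p', Step p p' → ∃ q', Steps q q' ∧ R p' q') ∧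
    (∀ t p', LStep p t p' → ∃ q', WLStep q t q' ∧ R p' q')

/-- Applicative similarity `≲app`: the union of all applicative simulations. -/
def AppSim (p q : Tm) : Prop := ∃ R, IsAppSim R ∧ R p q

/-- One-hole contexts `C[·]`. -/
inductive Ctx : Type
  | hole : Ctx
  | S1 (c : Ctx) : Ctx
  | K1 (c : Ctx) : Ctx
  | S2L (c : Ctx) (s : Tm) : Ctx
  | S2R (t : Tm) (c : Ctx) : Ctx
  | appL (c : Ctx) (s : Tm) : Ctx
  | appR (t : Tm) (c : Ctx) : Ctx

/-- `C[p]`: plugging a term into the hole of a context. -/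
def plug : Ctx → Tm → Tm
  | .hole, p => p
  | .S1 c, p => .S1 (plug c p)
  | .K1 c, p => .K1 (plug c p)
  | .S2L c s, p => .S2 (plug c p) s
  | .S2R t c, p => .S2 t (plug c p)
  | .appL c s, p => .app (plug c p) s
  | .appR t c, p => .app t (plug c p)

/-- The contextual preorder `≲ctx`. -/
def CtxLe (p q : Tm) : Prop := ∀ C : Ctx, Conv (plug C p) → Conv (plug C q)

/-- Congruences: relations compatible with all xCL operators. -/
def IsCong (R : Tm → Tm → Prop) : Prop :=
  R .S .S ∧ R .K .K ∧ R .I .I ∧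
  (∀ p q, R p q → R (.S1 p) (.S1 q)) ∧
  (∀ p q, R p q → R (.K1 p) (.K1 q)) ∧
  (∀ p q p' q', R p q → R p' q' → R (.S2 p p') (.S2 q q')) ∧
  (∀ p q p' q', R p q → R p' q' → R (.app p p') (.app q q'))

/-- Adequacy for termination. -/
def Adequate (R : Tm → Tm → Prop) : Prop := ∀ p q, R p q → Conv p → Conv q

/-- The step-indexed approximations `Lⁿ`. -/
def LrelN : ℕ → Tm → Tm → Prop
  | 0, _, _ => True
  | n+1, p, q => LrelN n p q ∧
      (∀ p', Step p p' → ∃ q', Steps q q' ∧ LrelN n p' q') ∧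
      (Terminates p → ∃ qb, BigStep q qb ∧
        ∀ d e p' q', LrelN n d e → LStep p d p' → LStep qb e q' → LrelN n p' q')

/-- The step-indexed logical relation `L = ⋂ₙ Lⁿ`. -/
def LRel (p q : Tm) : Prop := ∀ n, LrelN n p q

end XCL

/-!
The proof goes through the step-indexed logical relation `L = ⋂ₙ Lⁿ`. Each `Lⁿ` is a
congruence, by induction on `n`, so `L` is a congruence and in particular reflexive and closed
under contexts; `L` is adequate because a reduction of `p` to a value in `k` steps is matched
by `q` already at index `k + 1`. Finally `L` absorbs applicative similarity on the right,
`L ; ≲app ⊆ L`, since reduction is deterministic, so that `≲app ⊆ L` by reflexivity of `L`.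
-/

namespace XCL

variable {p q r p' q' d e : Tm}

theorem LStep.terminates {t : Tm} (h : LStep p t p') : Terminates p := by
  intro _ hs; cases h <;> cases hs

theorem LStep.det {t : Tm} (h₁ : LStep p t p') (h₂ : LStep p t q') : p' = q' := by
  cases h₁ <;> cases h₂ <;> rfl

theorem Step.det (h₁ : Step p p') (h₂ : Step p q') : p' = q' := by
  induction h₁ generalizing q' with
  | appL _ h ih =>
    cases h₂ with
    | appL _ h' => rw [ih h']
    | beta h' => exact absurd h (h'.terminates _)
  | beta h =>
    cases h₂ with
    | appL _ h' => exact absurd h' (h.terminates _)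
    | beta h' => exact h.det h'

theorem not_terminates_app (p q : Tm) : ¬ Terminates (.app p q) := by
  intro h
  induction p generalizing q with
  | app a b iha => exact iha b fun r hr => h _ (.appL q hr)
  | S => exact h _ (.beta (.S q))
  | K => exact h _ (.beta (.K q))
  | I => exact h _ (.beta (.I q))
  | S1 t => exact h _ (.beta (.S1 t q))
  | K1 t => exact h _ (.beta (.K1 t q))
  | S2 t s => exact h _ (.beta (.S2 t s q))

theorem Terminates.exists_lstep (h : Terminates p) (t : Tm) : ∃ p', LStep p t p' := by
  cases p with
  | app a b => exact absurd h (not_terminates_app a b)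
  | S => exact ⟨_, .S t⟩
  | K => exact ⟨_, .K t⟩
  | I => exact ⟨_, .I t⟩
  | S1 s => exact ⟨_, .S1 s t⟩
  | K1 s => exact ⟨_, .K1 s t⟩
  | S2 s u => exact ⟨_, .S2 s u t⟩

theorem Terminates.eq_of_steps (hp : Terminates p) (h : Steps p q) : q = p := by
  rcases h.cases_head with rfl | ⟨r, hr, -⟩
  · rfl
  · exact absurd hr (hp r)

theorem Steps.eq_of_terminates (hq : Steps p q) (hr : Steps p r) (hq' : Terminates q)
    (hr' : Terminates r) : q = r := by
  rcases Relation.ReflTransGen.total_of_right_unique (r := Step) (fun _ _ _ => Step.det) hq hr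
    with h | h
  · exact (hq'.eq_of_steps h).symm
  · exact hr'.eq_of_steps h

theorem Steps.app_left (h : Steps p p') (q : Tm) : Steps (.app p q) (.app p' q) :=
  Relation.ReflTransGen.lift (fun x => Tm.app x q) (fun _ _ h => Step.appL q h) _ _ h

theorem isAppSim_appSim : IsAppSim AppSim := by
  rintro p q ⟨R, hR, hpq⟩
  obtain ⟨hstep, hlab⟩ := hR p q hpq
  exact ⟨fun p' hs => let ⟨q', hq, h⟩ := hstep p' hs; ⟨q', hq, R, hR, h⟩,
    fun t p' hl => let ⟨q', hq, h⟩ := hlab t p' hl; ⟨q', hq, R, hR, h⟩⟩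

theorem AppSim.steps (h : AppSim p q) (hp : Steps p p') : ∃ q', Steps q q' ∧ AppSim p' q' := by
  induction hp using Relation.ReflTransGen.head_induction_on generalizing q with
  | refl => exact ⟨q, .refl, h⟩
  | head hs _ ih =>
    obtain ⟨q₁, hq₁, h₁⟩ := (isAppSim_appSim _ _ h).1 _ hs
    obtain ⟨q', hq', h'⟩ := ih h₁
    exact ⟨q', hq₁.trans hq', h'⟩

/-- By determinism of reduction, the answers of `q` to all labelled moves of `p` start from one
and the same value of `q`. -/
theorem AppSim.exists_bigStep (h : AppSim p q) (hp : Terminates p) :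
    ∃ qv, BigStep q qv ∧ ∀ t p' q', LStep p t p' → LStep qv t q' → AppSim p' q' := by
  obtain ⟨_, hI⟩ := hp.exists_lstep .I
  obtain ⟨_, ⟨qv, hq, hqv⟩, -⟩ := (isAppSim_appSim p q h).2 _ _ hI
  refine ⟨qv, ⟨hq, hqv.terminates⟩, fun t p' q' hp' hq' => ?_⟩
  obtain ⟨q'', ⟨qv', hq₂, hqv'⟩, hsim⟩ := (isAppSim_appSim p q h).2 _ _ hp'
  obtain rfl := hq.eq_of_terminates hq₂ hqv.terminates hqv'.terminates
  rwa [hq'.det hqv']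

theorem IsCong.forall {ι : Sort*} {R : ι → Tm → Tm → Prop} (h : ∀ i, IsCong (R i)) :
    IsCong fun p q => ∀ i, R i p q := by
  simp only [IsCong] at h ⊢
  aesop

theorem IsCong.refl {R : Tm → Tm → Prop} (hR : IsCong R) (p : Tm) : R p p := by
  obtain ⟨hS, hK, hI, hS1, hK1, hS2, happ⟩ := hR
  induction p with
  | S => exact hS
  | K => exact hK
  | I => exact hI
  | S1 _ ih => exact hS1 _ _ ih
  | K1 _ ih => exact hK1 _ _ ih
  | S2 _ _ ih ih' => exact hS2 _ _ _ _ ih ih'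
  | app _ _ ih ih' => exact happ _ _ _ _ ih ih'

theorem IsCong.plug {R : Tm → Tm → Prop} (hR : IsCong R) (h : R p q) (C : Ctx) :
    R (plug C p) (plug C q) := by
  have hrefl := hR.refl
  obtain ⟨-, -, -, hS1, hK1, hS2, happ⟩ := hR
  induction C with
  | hole => exact h
  | S1 _ ih => exact hS1 _ _ ih
  | K1 _ ih => exact hK1 _ _ ih
  | S2L _ s ih => exact hS2 _ _ _ _ ih (hrefl s)
  | S2R t _ ih => exact hS2 _ _ _ _ (hrefl t) ih
  | appL _ s ih => exact happ _ _ _ _ ih (hrefl s)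
  | appR t _ ih => exact happ _ _ _ _ (hrefl t) ih

theorem LrelN.succ_of_terminates {n : ℕ} (hp : Terminates p) (hq : Terminates q)
    (h : LrelN n p q)
    (hlab : ∀ d e p' q', LrelN n d e → LStep p d p' → LStep q e q' → LrelN n p' q') :
    LrelN (n + 1) p q :=
  ⟨h, fun p' hs => absurd hs (hp p'), fun _ => ⟨q, ⟨.refl, hq⟩, hlab⟩⟩

theorem LrelN.app {n : ℕ} (hpq : LrelN n p q) (hde : LrelN n d e) :
    LrelN n (.app p d) (.app q e) := by
  induction n generalizing p q d e with
  | zero => trivial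
  | succ n ih =>
    obtain ⟨hpq, hstep, hval⟩ := hpq
    refine ⟨ih hpq hde.1, fun r hr => ?_, fun h => absurd h (not_terminates_app p d)⟩
    cases hr with
    | appL _ hp =>
      obtain ⟨q', hq, hpq'⟩ := hstep _ hp
      exact ⟨.app q' e, hq.app_left e, ih hpq' hde.1⟩
    | beta hp =>
      obtain ⟨qv, ⟨hq, hqv⟩, hlab⟩ := hval hp.terminates
      obtain ⟨q', hq'⟩ := hqv.exists_lstep e
      exact ⟨q', (hq.app_left e).tail (.beta hq'), hlab _ _ _ _ hde.1 hp hq'⟩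

theorem isCong_lrelN : ∀ n, IsCong (LrelN n)
  | 0 => by simp [IsCong, LrelN]
  | n + 1 => by
    obtain ⟨hS, hK, hI, hS1, hK1, hS2, -⟩ := isCong_lrelN n
    refine ⟨?_, ?_, ?_, fun p q h => ?_, fun p q h => ?_, fun p q p' q' h h' => ?_,
      fun _ _ _ _ h h' => h.app h'⟩ <;>
      refine .succ_of_terminates (fun _ h => nomatch h) (fun _ h => nomatch h) ?_ ?_
    · exact hS
    · rintro d e _ _ hde ⟨⟩ ⟨⟩; exact hS1 d e hde
    · exact hK
    · rintro d e _ _ hde ⟨⟩ ⟨⟩; exact hK1 d e hde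
    · exact hI
    · rintro d e _ _ hde ⟨⟩ ⟨⟩; exact hde
    · exact hS1 p q h.1
    · rintro d e _ _ hde ⟨⟩ ⟨⟩; exact hS2 p q d e h.1 hde
    · exact hK1 p q h.1
    · rintro d e _ _ - ⟨⟩ ⟨⟩; exact h.1
    · exact hS2 p q p' q' h.1 h'.1
    · rintro d e _ _ hde ⟨⟩ ⟨⟩; exact (h.1.app hde).app (h'.1.app hde)

theorem isCong_lRel : IsCong LRel :=
  IsCong.forall isCong_lrelN

theorem conv_of_lrelN {pv : Tm} (h : BigStep p pv) : ∃ n, ∀ q, LrelN n p q → Conv q := by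
  obtain ⟨hp, hpv⟩ := h
  induction hp using Relation.ReflTransGen.head_induction_on with
  | refl => exact ⟨1, fun q hpq => let ⟨qv, hqv, _⟩ := hpq.2.2 hpv; ⟨qv, hqv⟩⟩
  | head hs _ ih =>
    obtain ⟨n, hn⟩ := ih
    refine ⟨n + 1, fun q hpq => ?_⟩
    obtain ⟨q', hq, hpq'⟩ := hpq.2.1 _ hs
    obtain ⟨qv, hq', hqv⟩ := hn q' hpq'
    exact ⟨qv, hq.trans hq', hqv⟩

theorem adequate_lRel : Adequate LRel := fun _ q h ⟨_, hp⟩ =>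
  let ⟨n, hn⟩ := conv_of_lrelN hp
  hn q (h n)

theorem LrelN.trans_appSim {n : ℕ} (hpq : LrelN n p q) (hqr : AppSim q r) : LrelN n p r := by
  induction n generalizing p q r with
  | zero => trivial
  | succ n ih =>
    obtain ⟨hpq, hstep, hval⟩ := hpq
    refine ⟨ih hpq hqr, fun p' hp => ?_, fun hp => ?_⟩
    · obtain ⟨q', hq, hpq'⟩ := hstep p' hp
      obtain ⟨r', hr, hqr'⟩ := hqr.steps hq
      exact ⟨r', hr, ih hpq' hqr'⟩
    · obtain ⟨qv, ⟨hq, hqv⟩, hlab⟩ := hval hp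
      obtain ⟨r₀, hr, hqvr⟩ := hqr.steps hq
      obtain ⟨rv, hrv, hlab'⟩ := hqvr.exists_bigStep hqv
      refine ⟨rv, ⟨hr.trans hrv.1, hrv.2⟩, fun d e p' r' hde hp' hr' => ?_⟩
      obtain ⟨q', hq'⟩ := hqv.exists_lstep e
      exact ih (hlab d e p' q' hde hp' hq') (hlab' e q' r' hq' hr')

theorem AppSim.lRel (h : AppSim p q) : LRel p q :=
  fun n => (isCong_lRel.refl p n).trans_appSim h

end XCL

open XCL in
/-- Applicative similarity for xCL is sound for the contextual preorder. -/
theorem appSim_sound : ∀ p q : Tm, AppSim p q → CtxLe p q := by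
  intro p q h C hconv
  exact adequate_lRel _ _ (isCong_lRel.plug h.lRel C) hconv
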